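/- arXiv:2507.20443 — 6 statements merged into one kernel-verified Lean document; each statement's English description precedes it below -/
import Mathlib

section
/- Let a, b ≥ 0 and suppose −a ≤ q_m − q_k ≤ b for every m ≠ k. Then the attention score to the query's own feature is sandwiched as 1 / (exp(b) · (N/c_k − 1) + 1) ≤ Attn_k(q) ≤ 1 / (exp(−a) · (N/c_k − 1) + 1). -/
/-! Dividing through by `c_k · exp(q_k)` gives `Attn_k(q) = c_k / Σ_j c_j · exp(q_j - q_k)`.
In that sum the `k`-th term is `c_k`, and each of the others lies between `c_j · exp(-a)` and
`c_j · exp(b)`; since `Σ_{j ≠ k} c_j = N - c_k`, the denominator lies between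
`c_k + exp(-a)(N - c_k)` and `c_k + exp(b)(N - c_k)`. -/

/-- Grouped softmax attention score of feature `m`:
`Attn_m(q) = c_m · exp(q_m) / Σ_j c_j · exp(q_j)`. -/
noncomputable def Attn {K : ℕ} (c : Fin K → ℕ) (q : Fin K → ℝ) (m : Fin K) : ℝ :=
  (c m : ℝ) * Real.exp (q m) / ∑ j, (c j : ℝ) * Real.exp (q j)

open Finset Real

section WeightedSum

variable {ι : Type*} [Fintype ι] [DecidableEq ι] (c f : ι → ℝ) (k : ι)

theorem sum_mul_le_of_le_of_ne (hc : ∀ j, 0 ≤ c j) {U : ℝ} (hf : ∀ j ≠ k, f j ≤ U) :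
    ∑ j, c j * f j ≤ c k * f k + U * (∑ j, c j - c k) := by
  rw [← add_sum_erase univ (fun j => c j * f j) (mem_univ k),
    ← add_sum_erase univ c (mem_univ k), add_sub_cancel_left, mul_sum]
  gcongr c k * f k + ?_
  refine sum_le_sum fun j hj => ?_
  rw [mul_comm U]
  exact mul_le_mul_of_nonneg_left (hf j (ne_of_mem_erase hj)) (hc j)

theorem le_sum_mul_of_le_of_ne (hc : ∀ j, 0 ≤ c j) {L : ℝ} (hf : ∀ j ≠ k, L ≤ f j) :
    c k * f k + L * (∑ j, c j - c k) ≤ ∑ j, c j * f j := by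
  rw [← add_sum_erase univ (fun j => c j * f j) (mem_univ k),
    ← add_sum_erase univ c (mem_univ k), add_sub_cancel_left, mul_sum]
  gcongr c k * f k + ?_
  refine sum_le_sum fun j hj => ?_
  rw [mul_comm L]
  exact mul_le_mul_of_nonneg_left (hf j (ne_of_mem_erase hj)) (hc j)

end WeightedSum

theorem one_div_mul_div_sub_one_add_one {x y : ℝ} (hx : x ≠ 0) (t : ℝ) :
    1 / (t * (y / x - 1) + 1) = x / (x + t * (y - x)) := by
  field_simp
  ring

theorem attn_eq_div_sum_exp_sub {K : ℕ} (c : Fin K → ℕ) (q : Fin K → ℝ) (k : Fin K) :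
    Attn c q k = c k / ∑ j, (c j : ℝ) * exp (q j - q k) := by
  have hscale : ∑ j, (c j : ℝ) * exp (q j) = (∑ j, (c j : ℝ) * exp (q j - q k)) * exp (q k) := by
    simp only [sum_mul, mul_assoc, ← exp_add, sub_add_cancel]
  rw [Attn, hscale, mul_div_mul_right _ _ (exp_pos _).ne']

theorem attn_sandwich_general (K : ℕ)
    (c : Fin K → ℕ) (hc : ∀ m, 1 ≤ c m) (N : ℕ) (hN : N = ∑ m, c m)
    (q : Fin K → ℝ) (k : Fin K) (a b : ℝ)
    (hgap : ∀ m, m ≠ k → -a ≤ q m - q k ∧ q m - q k ≤ b) :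
    1 / (Real.exp b * ((N : ℝ) / (c k : ℝ) - 1) + 1) ≤ Attn c q k ∧
    Attn c q k ≤ 1 / (Real.exp (-a) * ((N : ℝ) / (c k : ℝ) - 1) + 1) := by
  have hck : (0 : ℝ) < c k := by exact_mod_cast hc k
  have hN' : (N : ℝ) = ∑ j, (c j : ℝ) := by rw [hN, Nat.cast_sum]
  have hcj : ∀ j, (0 : ℝ) ≤ c j := fun j => (c j).cast_nonneg
  have hckN : (c k : ℝ) ≤ N := hN' ▸ single_le_sum (fun j _ => hcj j) (mem_univ k)
  have upper := sum_mul_le_of_le_of_ne _ (fun j => exp (q j - q k)) k hcj (U := exp b)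
    fun j hj => exp_le_exp.2 (hgap j hj).2
  have lower := le_sum_mul_of_le_of_ne _ (fun j => exp (q j - q k)) k hcj (L := exp (-a))
    fun j hj => exp_le_exp.2 (hgap j hj).1
  simp only [sub_self, exp_zero, mul_one, ← hN'] at upper lower
  have hlower_pos : 0 < (c k : ℝ) + exp (-a) * (N - c k) := by
    have := sub_nonneg.2 hckN
    positivity
  rw [attn_eq_div_sum_exp_sub, one_div_mul_div_sub_one_add_one hck.ne',
    one_div_mul_div_sub_one_add_one hck.ne']
  exact ⟨div_le_div_of_nonneg_left hck.le (hlower_pos.trans_le lower) upper,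
    div_le_div_of_nonneg_left hck.le hlower_pos lower⟩

/-- If `−a ≤ q_m − q_k ≤ b` for every `m ≠ k` (with `a, b ≥ 0`), then
`1 / (exp(b)·(N/c_k − 1) + 1) ≤ Attn_k(q) ≤ 1 / (exp(−a)·(N/c_k − 1) + 1)`. -/
theorem attn_sandwich (K : ℕ) (hK : 2 ≤ K)
    (c : Fin K → ℕ) (hc : ∀ m, 1 ≤ c m) (N : ℕ) (hN : N = ∑ m, c m)
    (q : Fin K → ℝ) (k : Fin K) (a b : ℝ) (ha : 0 ≤ a) (hb : 0 ≤ b)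
    (hgap : ∀ m, m ≠ k → -a ≤ q m - q k ∧ q m - q k ≤ b) :
    1 / (Real.exp b * ((N : ℝ) / (c k : ℝ) - 1) + 1) ≤ Attn c q k ∧
    Attn c q k ≤ 1 / (Real.exp (-a) * ((N : ℝ) / (c k : ℝ) - 1) + 1) :=
  attn_sandwich_general K c hc N hN q k a b hgap
end

section
/- Suppose there are reals 0 < a ≤ M such that a ≤ f_k − f_m ≤ M for every m ≠ k. Then the squared prediction error is controlled on both sides by the attention paid to the wrong features: a² · (1 − Attn_k(q))² ≤ (ŷ(q) − f_k)² ≤ M² · (1 − Attn_k(q))². -/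
/-- The attention prediction `ŷ(q) = Σ_m Attn_m(q) · f_m`. -/
noncomputable def yhat {K : ℕ} (c : Fin K → ℕ) (f : Fin K → ℝ) (q : Fin K → ℝ) : ℝ :=
  ∑ m, Attn c q m * f m

open Finset

section WeightedAverage

variable {ι : Type*} [Fintype ι] [DecidableEq ι] {w f : ι → ℝ} {k : ι} {a M : ℝ}

theorem one_sub_eq_sum_erase_of_sum_eq_one (hw : ∑ m, w m = 1) :
    1 - w k = ∑ m ∈ univ.erase k, w m := by
  rw [sum_erase_eq_sub (mem_univ k), hw]

theorem sub_weighted_sum_eq_sum_erase (hw : ∑ m, w m = 1) :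
    f k - ∑ m, w m * f m = ∑ m ∈ univ.erase k, w m * (f k - f m) := by
  have hall : f k - ∑ m, w m * f m = ∑ m, w m * (f k - f m) := by
    simp only [mul_sub, sum_sub_distrib, ← sum_mul, hw, one_mul]
  rw [hall, ← add_sum_erase _ _ (mem_univ k), sub_self, mul_zero, zero_add]

theorem mul_one_sub_le_sub_weighted_sum (hw0 : ∀ m, 0 ≤ w m) (hw : ∑ m, w m = 1)
    (hgap : ∀ m, m ≠ k → a ≤ f k - f m) :
    a * (1 - w k) ≤ f k - ∑ m, w m * f m := by
  rw [sub_weighted_sum_eq_sum_erase hw, one_sub_eq_sum_erase_of_sum_eq_one hw, mul_sum]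
  refine sum_le_sum fun m hm => ?_
  rw [mul_comm a]
  exact mul_le_mul_of_nonneg_left (hgap m (ne_of_mem_erase hm)) (hw0 m)

theorem sub_weighted_sum_le_mul_one_sub (hw0 : ∀ m, 0 ≤ w m) (hw : ∑ m, w m = 1)
    (hgap : ∀ m, m ≠ k → f k - f m ≤ M) :
    f k - ∑ m, w m * f m ≤ M * (1 - w k) := by
  rw [sub_weighted_sum_eq_sum_erase hw, one_sub_eq_sum_erase_of_sum_eq_one hw, mul_sum]
  refine sum_le_sum fun m hm => ?_
  rw [mul_comm M]
  exact mul_le_mul_of_nonneg_left (hgap m (ne_of_mem_erase hm)) (hw0 m)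

theorem one_sub_nonneg_of_sum_eq_one (hw0 : ∀ m, 0 ≤ w m) (hw : ∑ m, w m = 1) :
    0 ≤ 1 - w k := by
  rw [one_sub_eq_sum_erase_of_sum_eq_one hw]
  exact sum_nonneg fun m _ => hw0 m

end WeightedAverage

section Attention

variable {K : ℕ} {c : Fin K → ℕ} {q : Fin K → ℝ}

theorem Attn_nonneg (m : Fin K) : 0 ≤ Attn c q m := by
  unfold Attn
  positivity

theorem sum_Attn {k : Fin K} (hk : c k ≠ 0) : ∑ m, Attn c q m = 1 := by
  have hpos : 0 < ∑ j, (c j : ℝ) * Real.exp (q j) :=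
    sum_pos' (fun j _ => by positivity)
      ⟨k, mem_univ k, mul_pos (Nat.cast_pos.mpr (Nat.pos_of_ne_zero hk)) (Real.exp_pos _)⟩
  unfold Attn
  rw [← sum_div, div_self hpos.ne']

end Attention

theorem sq_sandwich_of_le_of_le {a M x d : ℝ} (ha : 0 ≤ a) (hx : 0 ≤ x)
    (hlow : a * x ≤ d) (hhigh : d ≤ M * x) :
    a ^ 2 * x ^ 2 ≤ d ^ 2 ∧ d ^ 2 ≤ M ^ 2 * x ^ 2 := by
  have hax : 0 ≤ a * x := mul_nonneg ha hx
  rw [← mul_pow, ← mul_pow]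
  exact ⟨pow_le_pow_left₀ hax hlow 2, pow_le_pow_left₀ (hax.trans hlow) hhigh 2⟩

theorem sq_error_sandwich_general (K : ℕ)
    (c : Fin K → ℕ) (hc : ∀ m, 1 ≤ c m)
    (q : Fin K → ℝ) (f : Fin K → ℝ) (k : Fin K)
    (a M : ℝ) (ha : 0 < a)
    (hgap : ∀ m, m ≠ k → a ≤ f k - f m ∧ f k - f m ≤ M) :
    a ^ 2 * (1 - Attn c q k) ^ 2 ≤ (yhat c f q - f k) ^ 2 ∧
    (yhat c f q - f k) ^ 2 ≤ M ^ 2 * (1 - Attn c q k) ^ 2 := by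
  have hsum : ∑ m, Attn c q m = 1 := sum_Attn (Nat.one_le_iff_ne_zero.mp (hc k))
  rw [sub_sq_comm (yhat c f q)]
  exact sq_sandwich_of_le_of_le ha.le (one_sub_nonneg_of_sum_eq_one Attn_nonneg hsum)
    (mul_one_sub_le_sub_weighted_sum Attn_nonneg hsum fun m hm => (hgap m hm).1)
    (sub_weighted_sum_le_mul_one_sub Attn_nonneg hsum fun m hm => (hgap m hm).2)

/-- If `a ≤ f_k − f_m ≤ M` for every `m ≠ k` (with `0 < a ≤ M`), then
`a²·(1 − Attn_k(q))² ≤ (ŷ(q) − f_k)² ≤ M²·(1 − Attn_k(q))²`. -/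
theorem sq_error_sandwich (K : ℕ) (hK : 2 ≤ K)
    (c : Fin K → ℕ) (hc : ∀ m, 1 ≤ c m)
    (q : Fin K → ℝ) (f : Fin K → ℝ) (k : Fin K)
    (a M : ℝ) (ha : 0 < a) (haM : a ≤ M)
    (hgap : ∀ m, m ≠ k → a ≤ f k - f m ∧ f k - f m ≤ M) :
    a ^ 2 * (1 - Attn c q k) ^ 2 ≤ (yhat c f q - f k) ^ 2 ∧
    (yhat c f q - f k) ^ 2 ≤ M ^ 2 * (1 - Attn c q k) ^ 2 :=
  sq_error_sandwich_general K c hc q f k a M ha hgap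
end

section
/- The partial derivative of the squared prediction loss with respect to the target logit satisfies the exact formula ∂ℓ/∂q_k = −Attn_k(q) · (ŷ(q) − f_k)², which is always ≤ 0. Consequently, for any step size η ≥ 0, a gradient-descent step q'_k = q_k − η · ∂ℓ/∂q_k never decreases the target logit: q'_k ≥ q_k. -/
/-- The squared prediction loss `ℓ(q) = ½·(ŷ(q) − f_k)²`. -/
noncomputable def loss {K : ℕ} (c : Fin K → ℕ) (f : Fin K → ℝ) (k : Fin K)
    (q : Fin K → ℝ) : ℝ :=
  (1 / 2) * (yhat c f q - f k) ^ 2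

/-- `∂ℓ/∂q_j`: the derivative of the loss along the `j`-th coordinate direction. -/
noncomputable def pderiv {K : ℕ} (c : Fin K → ℕ) (f : Fin K → ℝ) (k : Fin K)
    (q : Fin K → ℝ) (j : Fin K) : ℝ :=
  deriv (fun t => loss c f k (Function.update q j t)) (q j)

open Real Finset

theorem hasDerivAt_sum_mul_exp_update {ι : Type*} [Fintype ι] [DecidableEq ι]
    (w q : ι → ℝ) (j : ι) :
    HasDerivAt (fun t => ∑ m, w m * exp (Function.update q j t m)) (w j * exp (q j)) (q j) := by
  have hterm : ∀ m, HasDerivAt (fun t => w m * exp (Function.update q j t m))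
      (if m = j then w j * exp (q j) else 0) (q j) := by
    intro m
    rcases eq_or_ne m j with rfl | hmj
    · simpa using (hasDerivAt_exp (q m)).const_mul (w m)
    · simpa [Function.update_of_ne hmj, hmj] using hasDerivAt_const (q j) (w m * exp (q m))
  simpa using HasDerivAt.fun_sum fun m (_ : m ∈ univ) => hterm m

section Attention

variable {K : ℕ} (c : Fin K → ℕ) (f : Fin K → ℝ)

theorem sum_mul_exp_pos {q : Fin K → ℝ} {k : Fin K} (hk : c k ≠ 0) :
    0 < ∑ m, (c m : ℝ) * exp (q m) :=
  sum_pos' (fun m _ => by positivity) ⟨k, mem_univ k, by positivity⟩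

theorem attn_nonneg (q : Fin K → ℝ) (m : Fin K) : 0 ≤ Attn c q m := by
  unfold Attn
  positivity

theorem yhat_eq_div (q : Fin K → ℝ) :
    yhat c f q = (∑ m, ((c m : ℝ) * f m) * exp (q m)) / ∑ m, (c m : ℝ) * exp (q m) := by
  simp only [yhat, Attn, sum_div]
  exact sum_congr rfl fun m _ => by ring

theorem hasDerivAt_yhat_update {q : Fin K → ℝ} (hS : ∑ m, (c m : ℝ) * exp (q m) ≠ 0)
    (j : Fin K) :
    HasDerivAt (fun t => yhat c f (Function.update q j t))
      (Attn c q j * (f j - yhat c f q)) (q j) := by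
  simp only [yhat_eq_div]
  have hupd : Function.update q j (q j) = q := Function.update_eq_self j q
  have hquot := (hasDerivAt_sum_mul_exp_update (fun m => (c m : ℝ) * f m) q j).fun_div
    (hasDerivAt_sum_mul_exp_update (fun m => (c m : ℝ)) q j) (by simpa [hupd] using hS)
  rw [hupd] at hquot
  refine hquot.congr_deriv ?_
  unfold Attn
  field_simp

theorem pderiv_eq {q : Fin K → ℝ} (hS : ∑ m, (c m : ℝ) * exp (q m) ≠ 0) (k j : Fin K) :
    pderiv c f k q j = (yhat c f q - f k) * Attn c q j * (f j - yhat c f q) := by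
  have hloss :=
    (((hasDerivAt_yhat_update c f hS j).sub_const (f k)).fun_pow 2).const_mul (1 / 2 : ℝ)
  rw [pderiv]
  unfold loss
  rw [hloss.deriv, Function.update_eq_self]
  ring

end Attention

theorem target_gradient_formula_general (K : ℕ)
    (c : Fin K → ℕ) (hc : ∀ m, 1 ≤ c m)
    (q : Fin K → ℝ) (f : Fin K → ℝ) (k : Fin K) (η : ℝ) (hη : 0 ≤ η) :
    pderiv c f k q k = -(Attn c q k * (yhat c f q - f k) ^ 2) ∧
    pderiv c f k q k ≤ 0 ∧
    q k ≤ q k - η * pderiv c f k q k := by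
  have hS := (sum_mul_exp_pos c (q := q) (Nat.one_le_iff_ne_zero.mp (hc k))).ne'
  have hformula : pderiv c f k q k = -(Attn c q k * (yhat c f q - f k) ^ 2) := by
    rw [pderiv_eq c f hS]
    ring
  have hnonpos : pderiv c f k q k ≤ 0 := by
    rw [hformula, neg_nonpos]
    exact mul_nonneg (attn_nonneg c q k) (sq_nonneg _)
  exact ⟨hformula, hnonpos, le_sub_self_iff _ |>.mpr (mul_nonpos_of_nonneg_of_nonpos hη hnonpos)⟩

/-- Target-logit gradient (Lemma 2): `∂ℓ/∂q_k = −Attn_k(q)·(ŷ(q) − f_k)² ≤ 0`, so a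
gradient step `q'_k = q_k − η·∂ℓ/∂q_k` with `η ≥ 0` never decreases the target logit. -/
theorem target_gradient_formula (K : ℕ) (hK : 2 ≤ K)
    (c : Fin K → ℕ) (hc : ∀ m, 1 ≤ c m)
    (q : Fin K → ℝ) (f : Fin K → ℝ) (k : Fin K) (η : ℝ) (hη : 0 ≤ η) :
    pderiv c f k q k = -(Attn c q k * (yhat c f q - f k) ^ 2) ∧
    pderiv c f k q k ≤ 0 ∧
    q k ≤ q k - η * pderiv c f k q k :=
  target_gradient_formula_general K c hc q f k η hη
end

section
/- Assume K ≥ 2, reals 0 < u ≤ 1 ≤ U < K, and counts satisfying u·N/K ≤ c_j ≤ U·N/K for every j. If the logits satisfy 0 ≤ q_k ≤ log K and |q_m| ≤ q_k / K for every m ≠ k, then the target attention is bounded below by Attn_k(q) ≥ 1 / (e · (K/u − 1) + 1) (hence Attn_k(q) = Ω(1/K)), and the residual attention is bounded below by 1 − Attn_k(q) ≥ (K/U − 1) / (2K + (K/U − 1)). -/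
/-!
For the target bound, `q_k` is the largest logit, so the normaliser is at most `N · exp q_k` and
`Attn_k ≥ c_k / N ≥ u / K`. For the residual bound, `|q_m| ≤ q_k / K ≤ log K / K ≤ log 2` makes every
off-target weight `exp q_m` at least `1/2`, while `exp q_k ≤ K`; since `1 - Attn_k = R / (a + R)`
is increasing in the residual mass `R` and decreasing in the target mass `a`, it is at least
`x / (U N + x)` with `x = N (K - U) / (2K) ≤ (N - c_k) / 2`.
-/

open Finset Real

lemma div_add_le_div_add {a a' x r : ℝ} (ha : 0 < a) (haa' : a ≤ a') (hx : 0 ≤ x)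
    (hxr : x ≤ r) : x / (a' + x) ≤ r / (a + r) := by
  rw [div_le_div_iff₀ (by linarith) (by linarith)]
  nlinarith [mul_le_mul hxr haa' ha.le (hx.trans hxr)]

lemma one_div_exp_one_mul_sub_one_add_one_le {t : ℝ} (ht : 1 ≤ t) :
    1 / (exp 1 * (t - 1) + 1) ≤ 1 / t :=
  one_div_le_one_div_of_le (by linarith) <| by
    nlinarith [le_mul_of_one_le_left (sub_nonneg.2 ht) (one_le_exp zero_le_one)]

lemma log_natCast_le_mul_log_two (n : ℕ) : log n ≤ n * log 2 := by
  calc log n ≤ log ((2 : ℝ) ^ n) := by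
        rcases n.eq_zero_or_pos with rfl | hn
        · simp
        exact log_le_log (by positivity) (by exact_mod_cast Nat.lt_two_pow_self.le)
    _ = n * log 2 := log_pow 2 n

lemma le_of_abs_le_div {x y K : ℝ} (hy : 0 ≤ y) (hK : 1 ≤ K) (hx : |x| ≤ y / K) : x ≤ y :=
  (le_abs_self x).trans (hx.trans (div_le_self hy hK))

lemma half_le_exp_of_abs_le_div {K : ℕ} (hK : 0 < K) {x y : ℝ} (hy : y ≤ log K)
    (hx : |x| ≤ y / K) : 1 / 2 ≤ exp x := by
  have hK' : (0 : ℝ) < K := by exact_mod_cast hK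
  have hy2 : y / K ≤ log 2 := by
    rw [div_le_iff₀ hK']
    linarith [log_natCast_le_mul_log_two K]
  calc 1 / 2 = exp (-log 2) := by rw [exp_neg, exp_log two_pos, one_div]
    _ ≤ exp x := exp_le_exp.2 (by linarith [neg_abs_le x])

section Attn

variable {K : ℕ} {c : Fin K → ℕ} {q : Fin K → ℝ} {k : Fin K}

lemma attn_eq_div_add_sum_erase (c : Fin K → ℕ) (q : Fin K → ℝ) (k : Fin K) :
    Attn c q k = c k * exp (q k) /
      (c k * exp (q k) + ∑ j ∈ univ.erase k, (c j : ℝ) * exp (q j)) := by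
  rw [Attn, add_sum_erase _ (fun j => (c j : ℝ) * exp (q j)) (mem_univ k)]

lemma one_sub_attn (hk : 0 < c k) :
    1 - Attn c q k = (∑ j ∈ univ.erase k, (c j : ℝ) * exp (q j)) /
      (c k * exp (q k) + ∑ j ∈ univ.erase k, (c j : ℝ) * exp (q j)) := by
  rw [attn_eq_div_add_sum_erase, one_sub_div (by positivity), add_sub_cancel_left]

lemma div_sum_le_attn_of_forall_le (hk : 0 < c k) (hmax : ∀ j, q j ≤ q k) :
    (c k : ℝ) / ∑ j, (c j : ℝ) ≤ Attn c q k := by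
  have hS : ∑ j, (c j : ℝ) * exp (q j) ≤ (∑ j, (c j : ℝ)) * exp (q k) := by
    rw [sum_mul]
    exact sum_le_sum fun j _ => by gcongr; exact hmax j
  have hS0 : 0 < ∑ j, (c j : ℝ) * exp (q j) := lt_of_lt_of_le (by positivity) <|
    single_le_sum (f := fun j => (c j : ℝ) * exp (q j)) (fun j _ => by positivity) (mem_univ k)
  rw [Attn, ← mul_div_mul_right _ _ (exp_pos (q k)).ne']
  exact div_le_div_of_nonneg_left (by positivity) hS0 hS

lemma mul_sum_sub_le_sum_erase {b : ℝ} (hb : ∀ j ≠ k, b ≤ exp (q j)) :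
    b * (∑ j, (c j : ℝ) - c k) ≤ ∑ j ∈ univ.erase k, (c j : ℝ) * exp (q j) := by
  rw [← sum_erase_eq_sub (mem_univ k), mul_sum]
  exact sum_le_sum fun j hj => by rw [mul_comm]; gcongr; exact hb j (ne_of_mem_erase hj)

lemma div_add_le_one_sub_attn {a b x : ℝ} (hk : 0 < c k) (ha : c k * exp (q k) ≤ a)
    (hb : ∀ j ≠ k, b ≤ exp (q j)) (hx : 0 ≤ x) (hxb : x ≤ b * (∑ j, (c j : ℝ) - c k)) :
    x / (a + x) ≤ 1 - Attn c q k := by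
  rw [one_sub_attn hk]
  exact div_add_le_div_add (by positivity) ha hx (hxb.trans (mul_sum_sub_le_sum_erase hb))

end Attn

/-- Phase I attention bounds (Lemma C.1): with balanced counts
`u·N/K ≤ c_j ≤ U·N/K` (`0 < u ≤ 1 ≤ U < K`), `0 ≤ q_k ≤ log K`, and
`|q_m| ≤ q_k/K` for `m ≠ k`, the target attention satisfies
`Attn_k(q) ≥ 1/(e·(K/u − 1) + 1)` and
`1 − Attn_k(q) ≥ (K/U − 1)/(2K + (K/U − 1))`. -/
theorem phaseI_attention_bounds (K : ℕ) (hK : 2 ≤ K)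
    (c : Fin K → ℕ) (hc : ∀ m, 1 ≤ c m) (N : ℕ) (hN : N = ∑ m, c m)
    (u U : ℝ) (hu : 0 < u) (hu1 : u ≤ 1) (h1U : 1 ≤ U) (hUK : U < (K : ℝ))
    (hcnt : ∀ j, u * (N : ℝ) / (K : ℝ) ≤ (c j : ℝ) ∧ (c j : ℝ) ≤ U * (N : ℝ) / (K : ℝ))
    (q : Fin K → ℝ) (k : Fin K)
    (hq0 : 0 ≤ q k) (hqk : q k ≤ Real.log K)
    (hqm : ∀ m, m ≠ k → |q m| ≤ q k / (K : ℝ)) :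
    1 / (Real.exp 1 * ((K : ℝ) / u - 1) + 1) ≤ Attn c q k ∧
    ((K : ℝ) / U - 1) / (2 * (K : ℝ) + ((K : ℝ) / U - 1)) ≤ 1 - Attn c q k := by
  have hK0 : (0 : ℝ) < K := by positivity
  have hck : 0 < c k := hc k
  have hNsum : (N : ℝ) = ∑ j, (c j : ℝ) := by rw [hN]; push_cast; rfl
  have hN0 : (0 : ℝ) < N := by
    rw [hN]; exact_mod_cast hck.trans_le (single_le_sum (by simp) (mem_univ k))
  have hckN : (c k : ℝ) * K ≤ U * N := (le_div_iff₀ hK0).1 (hcnt k).2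
  constructor
  · have hmax : ∀ j, q j ≤ q k := fun j => by
      rcases eq_or_ne j k with rfl | hj
      exacts [le_rfl, le_of_abs_le_div hq0 (by linarith) (hqm j hj)]
    calc 1 / (exp 1 * ((K : ℝ) / u - 1) + 1) ≤ 1 / ((K : ℝ) / u) :=
          one_div_exp_one_mul_sub_one_add_one_le ((one_le_div hu).2 (by linarith))
      _ = u / K := one_div_div _ _
      _ ≤ c k / N := by
        rw [div_le_div_iff₀ hK0 hN0]
        linarith [(div_le_iff₀ hK0).1 (hcnt k).1]
      _ ≤ Attn c q k := hNsum ▸ div_sum_le_attn_of_forall_le hck hmax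
  · have hexp : exp (q k) ≤ K := by rwa [← le_log_iff_exp_le hK0]
    calc ((K : ℝ) / U - 1) / (2 * (K : ℝ) + ((K : ℝ) / U - 1))
          = N * (K - U) / (2 * K) / (U * N + N * (K - U) / (2 * K)) := by
            field_simp
      _ ≤ 1 - Attn c q k := by
        refine div_add_le_one_sub_attn hck ?_
          (fun j hj => half_le_exp_of_abs_le_div (by omega) hqk (hqm j hj))
          (div_nonneg (mul_nonneg hN0.le (by linarith)) (by positivity)) ?_
        · exact (mul_le_mul_of_nonneg_left hexp (by positivity)).trans hckN
        · rw [← hNsum, div_le_iff₀ (by positivity)]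
          linarith
end

section
/- Let ε' > 0 and u > 0, suppose c_k ≥ u·N/K, and suppose the logit gaps satisfy q_k − q_m ≥ log K + log(1/ε') for every m ≠ k. Then the attention paid to features other than the query's own feature satisfies 1 − Attn_k(q) ≤ ε' · (K/u − 1) / K ≤ ε' / u. -/
open Finset Real

section

variable {ι : Type*} [Fintype ι] [DecidableEq ι]

lemma one_sub_div_sum_le_sum_erase_div {w : ι → ℝ} (hw : ∀ j, 0 ≤ w j) {k : ι} (hk : 0 < w k) :
    1 - w k / ∑ j, w j ≤ (∑ j ∈ univ.erase k, w j) / w k := by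
  have hrest : 0 ≤ ∑ j ∈ univ.erase k, w j := sum_nonneg fun j _ => hw j
  rw [← add_sum_erase univ w (mem_univ k)]
  calc 1 - w k / (w k + ∑ j ∈ univ.erase k, w j)
      = (∑ j ∈ univ.erase k, w j) / (w k + ∑ j ∈ univ.erase k, w j) := by
        field_simp
        ring
    _ ≤ (∑ j ∈ univ.erase k, w j) / w k := div_le_div_of_nonneg_left hrest hk (by linarith)

lemma sum_erase_mul_exp_le {c q : ι → ℝ} (hc : ∀ j, 0 ≤ c j) {k : ι} {δ : ℝ}
    (hq : ∀ m, m ≠ k → exp (q m) ≤ δ * exp (q k)) :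
    ∑ m ∈ univ.erase k, c m * exp (q m) ≤ δ * exp (q k) * ((∑ m, c m) - c k) := by
  calc ∑ m ∈ univ.erase k, c m * exp (q m)
      ≤ ∑ m ∈ univ.erase k, c m * (δ * exp (q k)) :=
        sum_le_sum fun m hm => mul_le_mul_of_nonneg_left (hq m (ne_of_mem_erase hm)) (hc m)
    _ = δ * exp (q k) * ((∑ m, c m) - c k) := by
        rw [← sum_mul, sum_erase_eq_sub (mem_univ k), mul_comm]

end

lemma exp_le_div_mul_exp_of_log_add_log_le_sub {a ε x y : ℝ} (ha : 0 < a) (hε : 0 < ε)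
    (h : log a + log (1 / ε) ≤ x - y) : exp y ≤ ε / a * exp x := by
  calc exp y ≤ exp (x - (log a + log (1 / ε))) := exp_le_exp.mpr (by linarith)
    _ = ε / a * exp x := by
        rw [exp_sub, exp_add, exp_log ha, exp_log (one_div_pos.mpr hε)]
        field_simp

lemma one_sub_Attn_le {K : ℕ} {c : Fin K → ℕ} {q : Fin K → ℝ} {k : Fin K} {δ : ℝ}
    (hck : 1 ≤ c k) (hq : ∀ m, m ≠ k → exp (q m) ≤ δ * exp (q k)) :
    1 - Attn c q k ≤ δ * (((∑ m, c m : ℕ) : ℝ) - c k) / c k := by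
  have hck' : (0 : ℝ) < c k := by exact_mod_cast hck
  calc 1 - Attn c q k
      ≤ (∑ m ∈ univ.erase k, (c m : ℝ) * exp (q m)) / (c k * exp (q k)) :=
        one_sub_div_sum_le_sum_erase_div (w := fun j => (c j : ℝ) * exp (q j))
          (fun j => by positivity) (by positivity)
    _ ≤ δ * exp (q k) * ((∑ m, (c m : ℝ)) - c k) / (c k * exp (q k)) := by
        gcongr
        exact sum_erase_mul_exp_le (fun j => Nat.cast_nonneg _) hq
    _ = δ * (((∑ m, c m : ℕ) : ℝ) - c k) / c k := by
        push_cast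
        field_simp

lemma sub_div_le_div_sub_one {N K c u : ℝ} (hK : 0 < K) (hc : 0 < c) (hu : 0 < u)
    (h : u * N / K ≤ c) : (N - c) / c ≤ K / u - 1 := by
  rw [sub_div, div_self hc.ne', sub_le_sub_iff_right, div_le_div_iff₀ hc hu]
  rw [div_le_iff₀ hK] at h
  linarith

theorem end_of_phase_attention_bound_general (K : ℕ)
    (c : Fin K → ℕ) (hc : ∀ m, 1 ≤ c m) (N : ℕ) (hN : N = ∑ m, c m)
    (q : Fin K → ℝ) (k : Fin K) (ε' u : ℝ) (hε' : 0 < ε') (hu : 0 < u)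
    (hck : u * (N : ℝ) / (K : ℝ) ≤ (c k : ℝ))
    (hgap : ∀ m, m ≠ k → Real.log K + Real.log (1 / ε') ≤ q k - q m) :
    1 - Attn c q k ≤ ε' * ((K : ℝ) / u - 1) / (K : ℝ) ∧
    ε' * ((K : ℝ) / u - 1) / (K : ℝ) ≤ ε' / u := by
  have hK : (0 : ℝ) < K := by exact_mod_cast k.pos
  have hck' : (0 : ℝ) < c k := by exact_mod_cast hc k
  subst hN
  refine ⟨?_, ?_⟩
  · calc 1 - Attn c q k ≤ ε' / K * (((∑ m, c m : ℕ) : ℝ) - c k) / c k :=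
          one_sub_Attn_le (hc k) fun m hm =>
            exp_le_div_mul_exp_of_log_add_log_le_sub hK hε' (hgap m hm)
      _ = ε' / K * ((((∑ m, c m : ℕ) : ℝ) - c k) / c k) := mul_div_assoc _ _ _
      _ ≤ ε' / K * (K / u - 1) := by
          gcongr
          exact sub_div_le_div_sub_one hK hck' hu hck
      _ = ε' * ((K : ℝ) / u - 1) / (K : ℝ) := by ring
  · have : ε' * ((K : ℝ) / u - 1) / (K : ℝ) = ε' / u - ε' / K := by field_simp
    rw [this]
    linarith [div_pos hε' hK]

/-- End-of-phase attention bound: if `c_k ≥ u·N/K` and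
`q_k − q_m ≥ log K + log(1/ε')` for every `m ≠ k`, then
`1 − Attn_k(q) ≤ ε'·(K/u − 1)/K ≤ ε'/u`. -/
theorem end_of_phase_attention_bound (K : ℕ) (hK : 2 ≤ K)
    (c : Fin K → ℕ) (hc : ∀ m, 1 ≤ c m) (N : ℕ) (hN : N = ∑ m, c m)
    (q : Fin K → ℝ) (k : Fin K) (ε' u : ℝ) (hε' : 0 < ε') (hu : 0 < u)
    (hck : u * (N : ℝ) / (K : ℝ) ≤ (c k : ℝ))
    (hgap : ∀ m, m ≠ k → Real.log K + Real.log (1 / ε') ≤ q k - q m) :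
    1 - Attn c q k ≤ ε' * ((K : ℝ) / u - 1) / (K : ℝ) ∧
    ε' * ((K : ℝ) / u - 1) / (K : ℝ) ≤ ε' / u :=
  end_of_phase_attention_bound_general K c hc N hN q k ε' u hε' hu hck hgap
end

section
/- Let x_1, …, x_N be independent identically distributed random variables with values in Fin K and P(x_i = k) = p_k, where p : Fin K → [0,1] sums to 1, and let |V_k| = #{i : x_i = k}. If K ≥ 1 and δ ≥ √(20·K/N), then with probability at least 1 − 3·exp(−δ²·N/25), every k ∈ Fin K simultaneously satisfies (p_k − δ)·N ≤ |V_k| ≤ (p_k + δ)·N. -/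
/-!
Each count `|V_k|` is a sum of `N` independent indicator variables with mean `p_k`, so Hoeffding's
inequality bounds the probability that it leaves the band `N p_k ± δN` by `2 exp(-2δ²N)`. A union
bound over the `K` classes costs a factor `K`, which `δ²N ≥ 20K` absorbs into the weaker exponent
`δ²N/25`.
-/

open MeasureTheory ProbabilityTheory Real

section Hoeffding

variable {Ω ι : Type*} {m : MeasurableSpace Ω} {μ : Measure Ω} [IsProbabilityMeasure μ]
  [Fintype ι] {X : ι → Ω → ℝ} {a b ε : ℝ}

theorem measureReal_sum_sub_integral_ge_le (hX : ∀ i, AEMeasurable (X i) μ)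
    (hindep : iIndepFun X μ) (hab : ∀ i, ∀ᵐ ω ∂μ, X i ω ∈ Set.Icc a b) (hε : 0 ≤ ε) :
    μ.real {ω | ε ≤ ∑ i, (X i ω - μ[X i])} ≤
      exp (-2 * ε ^ 2 / (Fintype.card ι * (b - a) ^ 2)) := by
  have hcentered : iIndepFun (fun i ω ↦ X i ω - μ[X i]) μ :=
    (hindep.comp (fun i (y : ℝ) ↦ y - μ[X i]) fun _ ↦ measurable_id.sub_const _ :)
  refine (HasSubgaussianMGF.measure_sum_ge_le_of_iIndepFun hcentered (s := Finset.univ)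
    (fun i _ ↦ hasSubgaussianMGF_of_mem_Icc (hX i) (hab i)) hε).trans_eq ?_
  congr 1
  simp only [Finset.sum_const, Finset.card_univ, nsmul_eq_mul, NNReal.coe_mul, NNReal.coe_natCast,
    NNReal.coe_pow, NNReal.coe_div, coe_nnnorm, Real.norm_eq_abs, NNReal.coe_ofNat]
  rw [div_pow, sq_abs, show 2 * (Fintype.card ι * ((b - a) ^ 2 / 2 ^ 2)) =
    Fintype.card ι * (b - a) ^ 2 / 2 by ring, div_div_eq_mul_div]
  ring

theorem measureReal_abs_sum_sub_integral_ge_le (hX : ∀ i, AEMeasurable (X i) μ)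
    (hindep : iIndepFun X μ) (hab : ∀ i, ∀ᵐ ω ∂μ, X i ω ∈ Set.Icc a b) (hε : 0 ≤ ε) :
    μ.real {ω | ε ≤ |∑ i, (X i ω - μ[X i])|} ≤
      2 * exp (-2 * ε ^ 2 / (Fintype.card ι * (b - a) ^ 2)) := by
  have hupper := measureReal_sum_sub_integral_ge_le hX hindep hab hε
  have hlower := measureReal_sum_sub_integral_ge_le (fun i ↦ (hX i).neg)
    (hindep.comp (fun _ y ↦ -y) fun _ ↦ measurable_neg)
    (fun i ↦ (hab i).mono fun ω hω ↦ ⟨neg_le_neg hω.2, neg_le_neg hω.1⟩) hε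
  rw [show -a - -b = b - a by ring] at hlower
  have hsplit : {ω | ε ≤ |∑ i, (X i ω - μ[X i])|} ⊆
      {ω | ε ≤ ∑ i, (X i ω - μ[X i])} ∪ {ω | ε ≤ ∑ i, ((-X i) ω - μ[-X i])} := by
    intro ω hω
    have hneg : ∑ i, ((-X i) ω - μ[-X i]) = -∑ i, (X i ω - μ[X i]) := by
      simp only [Pi.neg_apply, integral_neg, ← Finset.sum_neg_distrib, neg_sub_neg, neg_sub]
    rcases le_abs'.1 (Set.mem_ofPred_eq ▸ hω) with h | h
    · exact Or.inr (by simp only [Set.mem_ofPred_eq, hneg]; linarith)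
    · exact Or.inl h
  calc _ ≤ _ := measureReal_mono hsplit
    _ ≤ _ := measureReal_union_le _ _
    _ ≤ _ := by linarith

end Hoeffding

theorem measureReal_abs_card_filter_sub_ge_le {Ω ι α : Type*} {m : MeasurableSpace Ω}
    {μ : Measure Ω} [IsProbabilityMeasure μ] [Fintype ι] [MeasurableSpace α]
    [MeasurableSingletonClass α] [DecidableEq α] {x : ι → Ω → α} (hx : ∀ i, Measurable (x i))
    (hindep : iIndepFun x μ) (k : α) {q : ℝ} (hq : ∀ i, μ.real {ω | x i ω = k} = q) {ε : ℝ}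
    (hε : 0 ≤ ε) :
    μ.real {ω | ε ≤ |((Finset.univ.filter fun i ↦ x i ω = k).card : ℝ) - Fintype.card ι * q|} ≤
      2 * exp (-2 * ε ^ 2 / Fintype.card ι) := by
  have hind : Measurable (({k} : Set α).indicator (1 : α → ℝ)) :=
    measurable_one.indicator (measurableSet_singleton k)
  set Y : ι → Ω → ℝ := fun i ↦ ({k} : Set α).indicator 1 ∘ x i
  have hmean : ∀ i, μ[Y i] = q :=
    fun i ↦ (integral_indicator_one (hx i (measurableSet_singleton k))).trans (hq i)
  have hcount : ∀ ω, ∑ i, (Y i ω - μ[Y i]) =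
      ((Finset.univ.filter fun i ↦ x i ω = k).card : ℝ) - Fintype.card ι * q := by
    intro ω
    rw [Finset.sum_sub_distrib, Finset.sum_congr rfl fun i _ ↦ hmean i]
    simp only [Finset.sum_const, Finset.card_univ, nsmul_eq_mul, Y, Function.comp_apply,
      Set.indicator_apply, Set.mem_singleton_iff, Pi.one_apply, Finset.sum_boole]
  have hunit : ∀ i, ∀ᵐ ω ∂μ, Y i ω ∈ Set.Icc (0 : ℝ) 1 :=
    fun i ↦ ae_of_all _ fun ω ↦ ⟨Set.indicator_nonneg (fun _ _ ↦ zero_le_one) _,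
      Set.indicator_le_self' (fun _ _ ↦ zero_le_one) _⟩
  have hoeffding : μ.real {ω | ε ≤ |∑ i, (Y i ω - μ[Y i])|} ≤
      2 * exp (-2 * ε ^ 2 / (Fintype.card ι * (1 - 0) ^ 2)) :=
    measureReal_abs_sum_sub_integral_ge_le (fun i ↦ (hind.comp (hx i)).aemeasurable)
      (hindep.comp _ fun _ ↦ hind) hunit hε
  simpa only [hcount, sub_zero, one_pow, mul_one] using hoeffding

theorem one_sub_sum_measureReal_le_of_compl_subset {Ω ι : Type*} {m : MeasurableSpace Ω}
    {μ : Measure Ω} [IsProbabilityMeasure μ] [Fintype ι] {E : Set Ω} {A : ι → Set Ω}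
    (hcover : Eᶜ ⊆ ⋃ i, A i) : 1 - ∑ i, μ.real (A i) ≤ μ.real E := by
  have hcompl : 1 ≤ μ.real E + μ.real Eᶜ := by
    simpa only [Set.union_compl_self, probReal_univ] using measureReal_union_le (μ := μ) E Eᶜ
  linarith [(measureReal_mono (μ := μ) hcover).trans (measureReal_iUnion_fintype_le A)]

theorem mul_two_mul_exp_neg_two_mul_le {K s : ℝ} (hK : 0 ≤ K) (hKs : 20 * K ≤ s) :
    K * (2 * exp (-2 * s)) ≤ 3 * exp (-s / 25) := by
  have hsplit : exp (-2 * s) = exp (-s / 25) / exp (49 / 25 * s) := by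
    rw [← exp_sub]; ring_nf
  have hK3 : 2 * K ≤ 3 * exp (49 / 25 * s) := by nlinarith [add_one_le_exp (49 / 25 * s)]
  calc K * (2 * exp (-2 * s)) = 2 * K * exp (-s / 25) / exp (49 / 25 * s) := by
        rw [hsplit]; ring
    _ ≤ 3 * exp (49 / 25 * s) * exp (-s / 25) / exp (49 / 25 * s) := by gcongr
    _ = 3 * exp (-s / 25) := by field_simp

theorem concentration_of_feature_counts_general
    {Ω : Type*} [MeasureSpace Ω] [IsProbabilityMeasure (ℙ : Measure Ω)]
    (K N : ℕ) (hN : 1 ≤ N)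
    (p : Fin K → ℝ)
    (x : Fin N → Ω → Fin K) (hmeas : ∀ i, Measurable (x i))
    (hindep : iIndepFun x ℙ)
    (hdist : ∀ i k, (ℙ {ω | x i ω = k}).toReal = p k)
    (δ : ℝ) (hδ : Real.sqrt (20 * (K : ℝ) / (N : ℝ)) ≤ δ) :
    1 - 3 * Real.exp (-(δ ^ 2) * (N : ℝ) / 25) ≤
      (ℙ {ω | ∀ k : Fin K,
          (p k - δ) * (N : ℝ) ≤ ((Finset.univ.filter (fun i => x i ω = k)).card : ℝ) ∧
          ((Finset.univ.filter (fun i => x i ω = k)).card : ℝ) ≤ (p k + δ) * (N : ℝ)}).toReal := by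
  set count : Ω → Fin K → ℝ := fun ω k ↦ ((Finset.univ.filter (fun i => x i ω = k)).card : ℝ)
  set E := {ω | ∀ k : Fin K, (p k - δ) * N ≤ count ω k ∧ count ω k ≤ (p k + δ) * N}
  have hN0 : (0 : ℝ) < N := by exact_mod_cast hN
  have hδ0 : 0 ≤ δ := (sqrt_nonneg _).trans hδ
  have hKδ : 20 * (K : ℝ) ≤ δ ^ 2 * N := by
    rw [← div_le_iff₀ hN0]
    exact (sqrt_le_left hδ0).mp hδ
  have htail : ∀ k, Measure.real ℙ {ω | δ * N ≤ |count ω k - N * p k|} ≤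
      2 * exp (-2 * (δ ^ 2 * N)) := by
    intro k
    have h := measureReal_abs_card_filter_sub_ge_le hmeas hindep k (fun i ↦ hdist i k)
      (mul_nonneg hδ0 hN0.le)
    rw [Fintype.card_fin] at h
    convert h using 3
    field_simp
  have hcover : Eᶜ ⊆ ⋃ k, {ω | δ * N ≤ |count ω k - N * p k|} := by
    intro ω hω
    by_contra hnot
    simp only [Set.mem_iUnion, Set.mem_ofPred_eq, not_exists, not_le, abs_sub_lt_iff] at hnot
    exact hω fun k ↦ ⟨by linarith [hnot k], by linarith [hnot k]⟩
  calc 1 - 3 * exp (-(δ ^ 2) * N / 25) ≤ 1 - K * (2 * exp (-2 * (δ ^ 2 * N))) := by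
        rw [neg_mul]; linarith [mul_two_mul_exp_neg_two_mul_le (Nat.cast_nonneg K) hKδ]
    _ ≤ 1 - ∑ k, Measure.real ℙ {ω | δ * N ≤ |count ω k - N * p k|} := by
        gcongr
        exact (Finset.sum_le_sum fun k _ ↦ htail k).trans_eq (by simp)
    _ ≤ Measure.real ℙ E := one_sub_sum_measureReal_le_of_compl_subset hcover

/-- Concentration of empirical feature counts (the event `E*`): with `N` i.i.d. tokens
taking value `k ∈ Fin K` with probability `p_k`, and `δ ≥ √(20K/N)`, with probability at
least `1 − 3·exp(−δ²N/25)` every class count `|V_k| = #{i : x_i = k}` lies in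
`[(p_k − δ)·N, (p_k + δ)·N]` simultaneously. -/
theorem concentration_of_feature_counts
    {Ω : Type*} [MeasureSpace Ω] [IsProbabilityMeasure (ℙ : Measure Ω)]
    (K N : ℕ) (hK : 1 ≤ K) (hN : 1 ≤ N)
    (p : Fin K → ℝ) (hp0 : ∀ k, 0 ≤ p k) (hp1 : ∀ k, p k ≤ 1) (hpsum : ∑ k, p k = 1)
    (x : Fin N → Ω → Fin K) (hmeas : ∀ i, Measurable (x i))
    (hindep : iIndepFun x ℙ)
    (hdist : ∀ i k, (ℙ {ω | x i ω = k}).toReal = p k)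
    (δ : ℝ) (hδ : Real.sqrt (20 * (K : ℝ) / (N : ℝ)) ≤ δ) :
    1 - 3 * Real.exp (-(δ ^ 2) * (N : ℝ) / 25) ≤
      (ℙ {ω | ∀ k : Fin K,
          (p k - δ) * (N : ℝ) ≤ ((Finset.univ.filter (fun i => x i ω = k)).card : ℝ) ∧
          ((Finset.univ.filter (fun i => x i ω = k)).card : ℝ) ≤ (p k + δ) * (N : ℝ)}).toReal :=
  concentration_of_feature_counts_general K N hN p x hmeas hindep hdist δ hδ
end
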